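/- Let α > 1 and define the resonance function Ω_α(ξ₁,ξ₂) = (ξ₁+ξ₂)|ξ₁+ξ₂|^{α-1} − ξ₁|ξ₁|^{α-1} − ξ₂|ξ₂|^{α-1} for ξ₁,ξ₂ ∈ ℝ. For ξ₁, ξ₂ ∈ ℝ with ξ₃ = −(ξ₁+ξ₂), let |ξ_min| ≤ |ξ_med| ≤ |ξ_max| denote the ordered values of |ξ₁|, |ξ₂|, |ξ₃|. Then there exist constants c, C > 0 depending only on α such that c·|ξ_min|·|ξ_max|^{α-1} ≤ |Ω_α(ξ₁,ξ₂)| ≤ C·|ξ_min|·|ξ_max|^{α-1}. -/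

import Mathlib

open Real

private noncomputable def OmR (α ξ₁ ξ₂ : ℝ) : ℝ :=
  (ξ₁ + ξ₂) * |ξ₁ + ξ₂| ^ (α - 1) - ξ₁ * |ξ₁| ^ (α - 1) - ξ₂ * |ξ₂| ^ (α - 1)

private noncomputable def KR (α ξ₁ ξ₂ : ℝ) : ℝ :=
  min |ξ₁| (min |ξ₂| |(-(ξ₁ + ξ₂))|) * max |ξ₁| (max |ξ₂| |(-(ξ₁ + ξ₂))|) ^ (α - 1)

private lemma OmR_swap (α a b : ℝ) : OmR α b a = OmR α a b := by
  unfold OmR; rw [add_comm b a]; ring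

private lemma OmR_neg (α a b : ℝ) : OmR α (-a) (-b) = - OmR α a b := by
  unfold OmR
  rw [show -a + -b = -(a + b) by ring, abs_neg, abs_neg, abs_neg]; ring

private lemma OmR_third (α a b : ℝ) : OmR α a (-(a + b)) = OmR α a b := by
  unfold OmR
  rw [show a + -(a + b) = -b by ring, abs_neg, abs_neg]; ring

private lemma KR_swap (α a b : ℝ) : KR α b a = KR α a b := by
  unfold KR
  rw [add_comm b a, min_left_comm, max_left_comm]

private lemma KR_neg (α a b : ℝ) : KR α (-a) (-b) = KR α a b := by
  unfold KR
  rw [show -a + -b = -(a + b) by ring, neg_neg, abs_neg, abs_neg, ← abs_neg (a + b)]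

private lemma KR_third (α a b : ℝ) : KR α a (-(a + b)) = KR α a b := by
  unfold KR
  rw [show -(a + -(a + b)) = b by ring, min_comm |(-(a + b))| |b|, max_comm |(-(a + b))| |b|]

private lemma key_ineq (α : ℝ) (hα : 1 < α) {x y : ℝ} (hx : 0 ≤ x) (hxy : x ≤ y) :
    2 * (1 - (2:ℝ) ^ (1 - α)) * (x * (x + y) ^ (α - 1)) ≤ (x + y) ^ α - x ^ α - y ^ α ∧
    (x + y) ^ α - x ^ α - y ^ α ≤ α * (x * (x + y) ^ (α - 1)) := by
  have hα1 : (0:ℝ) < α - 1 := by linarith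
  have hy : 0 ≤ y := le_trans hx hxy
  rcases eq_or_lt_of_le (add_nonneg hx hy) with hS | hS
  · have hx0 : x = 0 := by linarith
    have hy0 : y = 0 := by linarith
    subst hx0; subst hy0
    simp [Real.zero_rpow (by linarith : α ≠ 0), Real.zero_rpow (ne_of_gt hα1)]
  set S := x + y with hSdef
  have hSpos : 0 < S := hS
  have hSne : S ≠ 0 := ne_of_gt hSpos
  set A := S ^ (α - 1) with hA
  have hApos : 0 < A := Real.rpow_pos_of_pos hSpos _
  have hSA : S ^ α = A * S := by
    rw [hA, ← Real.rpow_add_one hSne (α - 1)]; ring_nf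
  have hxS : x ≤ S / 2 := by simp only [hSdef]; linarith
  have hxa : x ^ (α - 1) * x = x ^ α := by
    rw [← Real.rpow_add_one' hx (by linarith : α - 1 + 1 ≠ 0)]; ring_nf
  constructor
  · -- lower bound
    have hx1 : x ^ (α - 1) ≤ (S / 2) ^ (α - 1) :=
      Real.rpow_le_rpow hx hxS (le_of_lt hα1)
    have e1 : ((2:ℝ)) ^ (1 - α) = ((2:ℝ) ^ (α - 1))⁻¹ := by
      rw [show (1 - α) = -(α - 1) by ring, Real.rpow_neg (by norm_num)]
    have e2 : (S / 2) ^ (α - 1) = A * (2:ℝ) ^ (1 - α) := by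
      rw [Real.div_rpow (le_of_lt hSpos) (by norm_num), e1, hA]; ring
    have h2pos : (0:ℝ) < (2:ℝ) ^ (1 - α) := Real.rpow_pos_of_pos (by norm_num) _
    have cvx := (convexOn_rpow (le_of_lt hα)).2 (Set.mem_Ici.2 (le_of_lt hSpos))
      (Set.mem_Ici.2 (by positivity : (0:ℝ) ≤ S / 2))
      (by rw [sub_nonneg, div_le_one hSpos]; linarith : (0:ℝ) ≤ 1 - 2 * x / S)
      (by positivity : (0:ℝ) ≤ 2 * x / S)
      (by field_simp; ring)
    have epoint : (1 - 2 * x / S) • S + (2 * x / S) • (S / 2) = y := by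
      simp only [smul_eq_mul]; field_simp; ring
    rw [epoint] at cvx
    simp only [smul_eq_mul] at cvx
    have eS2 : (S / 2) ^ α = (S / 2) ^ (α - 1) * (S / 2) := by
      rw [← Real.rpow_add_one (by positivity : (S:ℝ)/2 ≠ 0) (α - 1)]; ring_nf
    have hxα : x ^ α ≤ A * (2:ℝ) ^ (1 - α) * x := by
      rw [← hxa]; nlinarith [hx1, e2]
    have hyα : y ^ α ≤ S ^ α - 2 * (x * A) + x * (A * (2:ℝ) ^ (1 - α)) := by
      have e7 : (1 - 2 * x / S) * S ^ α = S ^ α - 2 * (x * A) := by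
        rw [hSA]; field_simp
      have e8 : (2 * x / S) * (S / 2) ^ α = x * (A * (2:ℝ) ^ (1 - α)) := by
        rw [eS2, e2]; field_simp
      rw [e7, e8] at cvx; exact cvx
    nlinarith [hxα, hyα]
  · -- upper bound
    have hber := one_add_mul_self_le_rpow_one_add
      (show (-1:ℝ) ≤ -(x / S) by
        have : x / S ≤ 1 := (div_le_one hSpos).2 (by linarith)
        linarith) (le_of_lt hα)
    have e3 : 1 + -(x / S) = y / S := by field_simp; linarith
    have e4 : (y / S) ^ α = y ^ α / S ^ α := Real.div_rpow hy (le_of_lt hSpos) α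
    rw [e3, e4] at hber
    have hSApos : 0 < S ^ α := Real.rpow_pos_of_pos hSpos _
    have h5 : (1 + α * -(x / S)) * S ^ α ≤ y ^ α := by
      have := mul_le_mul_of_nonneg_right hber (le_of_lt hSApos)
      rwa [div_mul_cancel₀ _ (ne_of_gt hSApos)] at this
    have h6 : (x / S) * S ^ α = x * A := by rw [hSA]; field_simp
    have hxann : 0 ≤ x ^ α := Real.rpow_nonneg hx _
    nlinarith [h5, h6]

private lemma mul_abs_rpow (α : ℝ) (hα : 1 < α) {t : ℝ} (ht : 0 ≤ t) :
    t * |t| ^ (α - 1) = t ^ α := by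
  rw [abs_of_nonneg ht, mul_comm, ← Real.rpow_add_one' ht (by linarith : α - 1 + 1 ≠ 0)]
  ring_nf

private lemma base_bound (α : ℝ) (hα : 1 < α) (u v : ℝ) (hu : 0 ≤ u) (huv : u ≤ v) :
    2 * (1 - (2:ℝ) ^ (1 - α)) * KR α (-u) (-v) ≤ |OmR α (-u) (-v)| ∧
    |OmR α (-u) (-v)| ≤ α * KR α (-u) (-v) := by
  have hv : 0 ≤ v := le_trans hu huv
  have hK : KR α (-u) (-v) = u * (u + v) ^ (α - 1) := by
    rw [KR_neg]; unfold KR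
    rw [abs_of_nonneg hu, abs_of_nonneg hv, abs_neg,
      abs_of_nonneg (by linarith : (0:ℝ) ≤ u + v),
      min_eq_left (show v ≤ u + v by linarith), min_eq_left huv,
      max_eq_right (show v ≤ u + v by linarith), max_eq_right (show u ≤ u + v by linarith)]
  have hOm : OmR α (-u) (-v) = -((u + v) ^ α - u ^ α - v ^ α) := by
    rw [OmR_neg]; unfold OmR
    rw [mul_abs_rpow α hα (add_nonneg hu hv), mul_abs_rpow α hα hu, mul_abs_rpow α hα hv]
  have hkey := key_ineq α hα hu huv
  have h2lt : (2:ℝ) ^ (1 - α) < 1 :=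
    Real.rpow_lt_one_of_one_lt_of_neg (by norm_num) (by linarith)
  have hc0 : (0:ℝ) ≤ 2 * (1 - (2:ℝ) ^ (1 - α)) := by linarith
  have hnn : 0 ≤ (u + v) ^ α - u ^ α - v ^ α :=
    le_trans (mul_nonneg hc0 (mul_nonneg hu (Real.rpow_nonneg (by linarith) _))) hkey.1
  rw [hOm, abs_neg, abs_of_nonneg hnn, hK]
  exact hkey

/-- Two-sided bound on the resonance function `Ω_α` for `α > 1`. -/
theorem resonance_two_sided_bound (α : ℝ) (hα : 1 < α) :
    ∃ c C : ℝ, 0 < c ∧ 0 < C ∧ ∀ ξ₁ ξ₂ : ℝ,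
      c * (min |ξ₁| (min |ξ₂| |(-(ξ₁ + ξ₂))|) *
            max |ξ₁| (max |ξ₂| |(-(ξ₁ + ξ₂))|) ^ (α - 1)) ≤
        |(ξ₁ + ξ₂) * |ξ₁ + ξ₂| ^ (α - 1) - ξ₁ * |ξ₁| ^ (α - 1) - ξ₂ * |ξ₂| ^ (α - 1)| ∧
      |(ξ₁ + ξ₂) * |ξ₁ + ξ₂| ^ (α - 1) - ξ₁ * |ξ₁| ^ (α - 1) - ξ₂ * |ξ₂| ^ (α - 1)| ≤
        C * (min |ξ₁| (min |ξ₂| |(-(ξ₁ + ξ₂))|) *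
            max |ξ₁| (max |ξ₂| |(-(ξ₁ + ξ₂))|) ^ (α - 1)) := by
  have h2lt : (2:ℝ) ^ (1 - α) < 1 :=
    Real.rpow_lt_one_of_one_lt_of_neg (by norm_num) (by linarith)
  refine ⟨2 * (1 - (2:ℝ) ^ (1 - α)), α, by linarith, by linarith, ?_⟩
  have P1 : ∀ u v : ℝ, 0 ≤ u → 0 ≤ v →
      2 * (1 - (2:ℝ) ^ (1 - α)) * KR α (-u) (-v) ≤ |OmR α (-u) (-v)| ∧
      |OmR α (-u) (-v)| ≤ α * KR α (-u) (-v) := by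
    intro u v hu hv
    rcases le_total u v with h | h
    · exact base_bound α hα u v hu h
    · have := base_bound α hα v u hv h
      rwa [← OmR_swap α (-v) (-u), ← KR_swap α (-v) (-u)] at this
  have P2 : ∀ u v : ℝ, 0 ≤ u → 0 ≤ v →
      2 * (1 - (2:ℝ) ^ (1 - α)) * KR α u v ≤ |OmR α u v| ∧
      |OmR α u v| ≤ α * KR α u v := by
    intro u v hu hv
    have := P1 u v hu hv
    rwa [OmR_neg, abs_neg, KR_neg] at this
  intro ξ₁ ξ₂
  show 2 * (1 - (2:ℝ) ^ (1 - α)) * KR α ξ₁ ξ₂ ≤ |OmR α ξ₁ ξ₂| ∧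
    |OmR α ξ₁ ξ₂| ≤ α * KR α ξ₁ ξ₂
  rcases le_total 0 ξ₁ with h1 | h1 <;> rcases le_total 0 ξ₂ with h2 | h2
  · exact P2 ξ₁ ξ₂ h1 h2
  · -- 0 ≤ ξ₁, ξ₂ ≤ 0
    rcases le_total 0 (ξ₁ + ξ₂) with h3 | h3
    · rw [OmR_swap α ξ₂ ξ₁, KR_swap α ξ₂ ξ₁,
        ← OmR_third α ξ₂ ξ₁, ← KR_third α ξ₂ ξ₁]
      have := P1 (-ξ₂) (ξ₂ + ξ₁) (by linarith) (by linarith)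
      rwa [neg_neg] at this
    · rw [← OmR_third α ξ₁ ξ₂, ← KR_third α ξ₁ ξ₂]
      exact P2 ξ₁ (-(ξ₁ + ξ₂)) h1 (by linarith)
  · -- ξ₁ ≤ 0, 0 ≤ ξ₂
    rcases le_total 0 (ξ₁ + ξ₂) with h3 | h3
    · rw [← OmR_third α ξ₁ ξ₂, ← KR_third α ξ₁ ξ₂]
      have := P1 (-ξ₁) (ξ₁ + ξ₂) (by linarith) (by linarith)
      rwa [neg_neg] at this
    · rw [OmR_swap α ξ₂ ξ₁, KR_swap α ξ₂ ξ₁,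
        ← OmR_third α ξ₂ ξ₁, ← KR_third α ξ₂ ξ₁]
      exact P2 ξ₂ (-(ξ₂ + ξ₁)) h2 (by linarith)
  · have := P1 (-ξ₁) (-ξ₂) (by linarith) (by linarith)
    rwa [neg_neg, neg_neg] at this
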